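/- No Hall {2, 3}-subgroup of the symmetric group Sym₇ is contained in a Hall {2, 3, 5}-subgroup of Sym₇; that is, no subgroup of Sym₇ of order 144 is contained in a subgroup of order 720. In particular, a Hall {2, 3}-subgroup of Sym₇ cannot be obtained as the intersection of a Hall {2, 3}-subgroup with a Hall {2, 3, 5}-subgroup equal to it inside the latter. -/

import Mathlib

/-!
A subgroup `K ≤ Sym₇` of order 720 has index 7 > 2, so its normal core is trivial: a nontrivial
normal subgroup of `Sym₇` contains `Alt₇`. Hence `Sym₇` acts faithfully on the 7 cosets of `K`,
and `K`, the stabilizer of the trivial coset, embeds in the symmetric group of the other 6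
cosets, which it fills by counting. A subgroup `H ≤ K` of order 144 would therefore give a
subgroup of index 5 in `Sym₆`; but by the same core argument a subgroup of `Sym_n` (`n ≥ 5`)
of index greater than 2 has index at least `n`. Hall subgroups reduce to this case because
their orders are the `{2, 3}`- and `{2, 3, 5}`-parts of `5040`, namely 144 and 720.
-/

/-- `H` is a Hall `π`-subgroup of the ambient group: every prime divisor of `|H|`
belongs to `π`, and no prime in `π` divides the index `|G : H|`. -/
def IsHallSubgroup {G : Type*} [Group G] (π : Set ℕ) (H : Subgroup G) : Prop :=
  (∀ p : ℕ, p.Prime → p ∣ Nat.card H → p ∈ π) ∧ ∀ p ∈ π, ¬ p ∣ H.index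

open Equiv MulAction SubMulAction Nat

theorem IsHallSubgroup.card_eq {G : Type*} [Group G] {π : Set ℕ} {H : Subgroup G}
    (hH : IsHallSubgroup π H) {a b : ℕ} (hG : Nat.card G = a * b)
    (ha : ∀ p : ℕ, p.Prime → p ∣ a → p ∈ π) (hb : ∀ p ∈ π, ¬ p ∣ b) :
    Nat.card H = a := by
  have hHb : (Nat.card H).Coprime b :=
    coprime_of_dvd fun p hp hpH ↦ hb p (hH.1 p hp hpH)
  have haH : a.Coprime H.index :=
    coprime_of_dvd fun p hp hpa ↦ hH.2 p (ha p hp hpa)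
  have hmul : Nat.card H * H.index = a * b := H.card_mul_index.trans hG
  exact dvd_antisymm (hHb.dvd_of_dvd_mul_right ⟨H.index, hmul.symm⟩)
    (haH.dvd_of_dvd_mul_right ⟨b, hmul⟩)

namespace Subgroup

variable {G : Type*} [Group G]

theorem card_dvd_factorial_index_of_normalCore_eq_bot {H : Subgroup G} [H.FiniteIndex]
    (hH : H.normalCore = ⊥) : Nat.card G ∣ H.index ! := by
  rw [← index_bot, ← hH, normalCore_eq_ker, index_ker, index_eq_card, ← Nat.card_perm]
  exact card_subgroup_dvd_card _

theorem exists_injective_perm_ofStabilizer_of_le {H K : Subgroup G}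
    (hK : K.normalCore = ⊥) (hHK : H ≤ K) :
    ∃ f : H →* Perm (ofStabilizer G ((1 : G) : G ⧸ K)), Function.Injective f := by
  -- instance search does not find this action by itself
  let := (ofStabilizer G ((1 : G) : G ⧸ K)).mulAction
  refine ⟨(toPermHom _ _).comp (inclusion (hHK.trans (stabilizer_quotient K).ge)), ?_⟩
  rw [injective_iff_map_eq_one]
  intro h hh
  have hcore : (h : G) ∈ K.normalCore := by
    rw [normalCore_eq_ker, MonoidHom.mem_ker]
    ext x
    by_cases hx : x = ((1 : G) : G ⧸ K)
    · subst hx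
      exact mem_stabilizer_iff.mp ((stabilizer_quotient K).ge (hHK h.2))
    · exact congr_arg Subtype.val (DFunLike.congr_fun hh ⟨x, hx⟩)
  rw [hK, mem_bot] at hcore
  exact Subtype.ext hcore

end Subgroup

namespace Equiv.Perm

variable {α : Type*} [Fintype α] [DecidableEq α]

theorem normalCore_eq_bot_of_two_lt_index (hα : 5 ≤ Nat.card α) {H : Subgroup (Perm α)}
    (hH : 2 < H.index) : H.normalCore = ⊥ := by
  by_contra hcore
  have hA : alternatingGroup α ≤ H :=
    (alternatingGroup_le_of_normal hα ((Subgroup.nontrivial_iff_ne_bot _).mpr hcore)).trans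
      H.normalCore_le
  have : Nontrivial α := Finite.one_lt_card_iff_nontrivial.mp (by omega)
  have := Subgroup.index_antitone hA
  rw [alternatingGroup.index_eq_two] at this
  omega

theorem card_le_index_of_two_lt_index (hα : 5 ≤ Nat.card α) {H : Subgroup (Perm α)}
    (hH : 2 < H.index) : Nat.card α ≤ H.index := by
  have hdvd := H.card_dvd_factorial_index_of_normalCore_eq_bot
    (normalCore_eq_bot_of_two_lt_index hα hH)
  rw [Nat.card_perm] at hdvd
  by_contra! hlt
  exact (factorial_lt (by omega)).mpr hlt |>.not_ge (Nat.le_of_dvd (factorial_pos _) hdvd)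

theorem card_sub_one_le_relIndex (hα : 6 ≤ Nat.card α) {H K : Subgroup (Perm α)} (hHK : H ≤ K)
    (hK : K.index = Nat.card α) (hH : 2 < H.relIndex K) :
    Nat.card α - 1 ≤ H.relIndex K := by
  classical
  obtain ⟨f, hf⟩ := Subgroup.exists_injective_perm_ofStabilizer_of_le
    (normalCore_eq_bot_of_two_lt_index (by omega) (by omega)) hHK
  have : Fintype (ofStabilizer (Perm α) ((1 : Perm α) : Perm α ⧸ K)) := Fintype.ofFinite _
  have hY : Nat.card (ofStabilizer (Perm α) ((1 : Perm α) : Perm α ⧸ K)) = Nat.card α - 1 := by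
    rw [nat_card_ofStabilizer_eq, ← Subgroup.index_eq_card, hK]
  have hrange : f.range.index = H.relIndex K := by
    have h₁ := f.range.card_mul_index
    rw [← Nat.card_congr (MonoidHom.ofInjective hf).toEquiv, Nat.card_perm, hY] at h₁
    have h₂ := H.card_mul_index
    rw [← Subgroup.relIndex_mul_index hHK, hK, Nat.card_perm, ← mul_factorial_pred (by omega),
      ← h₁] at h₂
    refine Nat.eq_of_mul_eq_mul_left
      (Nat.mul_pos (by omega : 0 < Nat.card α) (Nat.card_pos (α := H))) ?_
    linear_combination h₂.symm
  rw [← hY, ← hrange]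
  exact card_le_index_of_two_lt_index (by omega) (hrange ▸ hH)

theorem card_perm_fin_seven : Nat.card (Perm (Fin 7)) = 5040 := by
  rw [Nat.card_perm, Nat.card_fin]
  rfl

theorem not_le_of_card_eq_144_of_card_eq_720 {H K : Subgroup (Perm (Fin 7))}
    (hH : Nat.card H = 144) (hK : Nat.card K = 720) : ¬ H ≤ K := by
  intro hHK
  have hKindex : K.index = Nat.card (Fin 7) := by
    have := K.card_mul_index
    rw [hK, card_perm_fin_seven] at this
    rw [Nat.card_fin]
    omega
  have hrel : H.relIndex K = 5 := by
    have := H.card_mul_index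
    rw [← Subgroup.relIndex_mul_index hHK, hKindex, hH, card_perm_fin_seven, Nat.card_fin] at this
    omega
  have := card_sub_one_le_relIndex (by simp) hHK hKindex (by omega)
  rw [hrel, Nat.card_fin] at this
  omega

end Equiv.Perm

theorem sym7_hall_two_three_not_le_hall_235 :
    (∀ H K : Subgroup (Equiv.Perm (Fin 7)),
      IsHallSubgroup {2, 3} H → IsHallSubgroup {2, 3, 5} K → ¬ H ≤ K) ∧
    (∀ H K : Subgroup (Equiv.Perm (Fin 7)),
      Nat.card H = 144 → Nat.card K = 720 → ¬ H ≤ K) := by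
  refine ⟨fun H K hH hK ↦ Perm.not_le_of_card_eq_144_of_card_eq_720 ?_ ?_,
    fun _ _ ↦ Perm.not_le_of_card_eq_144_of_card_eq_720⟩
  · refine hH.card_eq (b := 35) Perm.card_perm_fin_seven (fun p hp hpa ↦ ?_) (by simp)
    simpa [Nat.primeFactors] using Nat.mem_primeFactors.mpr ⟨hp, hpa, by norm_num⟩
  · refine hK.card_eq (b := 7) Perm.card_perm_fin_seven (fun p hp hpa ↦ ?_) (by simp)
    simpa [Nat.primeFactors] using Nat.mem_primeFactors.mpr ⟨hp, hpa, by norm_num⟩
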